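/- Let D₁₁, D₂₂ > 0 and let K̃ : ℝ³ → ℝ be twice continuously differentiable. Define K(x, y, θ) = K̃(x/√(2D₂₂), θ/√(2D₁₁), 2(y − xθ/2)/√(D₁₁D₂₂)). Then for all (x, y, θ) ∈ ℝ³: D₁₁ (∂_θ² K)(x, y, θ) + D₂₂ ((∂_x + θ∂_y)² K)(x, y, θ) = (1/2)[((∂₂ − 2u₁∂₃)² K̃) + ((∂₁ + 2u₂∂₃)² K̃)] evaluated at (u₁, u₂, u₃) = (x/√(2D₂₂), θ/√(2D₁₁), 2(y − xθ/2)/√(D₁₁D₂₂)), where ∂ᵢ denotes the partial derivative with respect to the i-th argument of K̃. Thus the coordinate transformation carries the Heisenberg approximation of the SE(2) diffusion generator to one half of the Kohn Laplacian on the Heisenberg group H₃. -/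

import Mathlib

/-!
The coordinate map `φ = coordMap D11 D22` relates the vector fields of the two sides: its
differential sends `∂_θ` at `p` to `(2D₁₁)^(-1/2) X₁` at `φ p`, and `∂_x + θ∂_y` to
`(2D₂₂)^(-1/2) X₂`, where `X₁ = ∂₂ − 2u₁∂₃` and `X₂ = ∂₁ + 2u₂∂₃`. By the chain rule,
differentiating `f ∘ φ` along a field related to `c • W` gives `c • (W f) ∘ φ`; applying this
twice gives `D₁₁ ∂_θ² K = D₁₁ (2D₁₁)⁻¹ (X₁² K̃) ∘ φ = ½ (X₁² K̃) ∘ φ`, and likewise for `X₂`.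
-/

/-- `∂_θ`, acting on functions of p = (x, y, θ). -/
noncomputable def Dtheta (f : ℝ × ℝ × ℝ → ℝ) (p : ℝ × ℝ × ℝ) : ℝ :=
  fderiv ℝ f p (0, 0, 1)

/-- The Heisenberg-approximation horizontal derivative `∂_x + θ ∂_y`,
acting on functions of p = (x, y, θ). -/
noncomputable def Dhor (f : ℝ × ℝ × ℝ → ℝ) (p : ℝ × ℝ × ℝ) : ℝ :=
  fderiv ℝ f p (1, p.2.2, 0)

/-- The Heisenberg vector field `∂₂ − 2u₁∂₃`, acting on functions of u = (u₁, u₂, u₃). -/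
noncomputable def X1 (f : ℝ × ℝ × ℝ → ℝ) (u : ℝ × ℝ × ℝ) : ℝ :=
  fderiv ℝ f u (0, 1, 0) - 2 * u.1 * fderiv ℝ f u (0, 0, 1)

/-- The Heisenberg vector field `∂₁ + 2u₂∂₃`, acting on functions of u = (u₁, u₂, u₃). -/
noncomputable def X2 (f : ℝ × ℝ × ℝ → ℝ) (u : ℝ × ℝ × ℝ) : ℝ :=
  fderiv ℝ f u (1, 0, 0) + 2 * u.2.1 * fderiv ℝ f u (0, 0, 1)

/-- The coordinate transformation
`(x, y, θ) ↦ (x/√(2D₂₂), θ/√(2D₁₁), 2(y − xθ/2)/√(D₁₁D₂₂))`. -/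
noncomputable def coordMap (D11 D22 : ℝ) (p : ℝ × ℝ × ℝ) : ℝ × ℝ × ℝ :=
  (p.1 / Real.sqrt (2 * D22), p.2.2 / Real.sqrt (2 * D11),
    2 * (p.2.1 - p.1 * p.2.2 / 2) / Real.sqrt (D11 * D22))

section DerivAlong

variable {𝕜 E F G : Type*} [NontriviallyNormedField 𝕜]
  [NormedAddCommGroup E] [NormedSpace 𝕜 E] [NormedAddCommGroup F] [NormedSpace 𝕜 F]
  [NormedAddCommGroup G] [NormedSpace 𝕜 G]

variable (𝕜) in
noncomputable def derivAlong (V : E → E) (f : E → G) (p : E) : G :=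
  fderiv 𝕜 f p (V p)

theorem derivAlong_const_smul (V : E → E) (f : E → G) (c : 𝕜) :
    derivAlong 𝕜 V (c • f) = c • derivAlong 𝕜 V f := by
  funext p
  simp only [derivAlong, fderiv_const_smul_field, Pi.smul_apply, smul_apply]

theorem ContDiff.differentiable_derivAlong {V : E → E} {f : E → G} (hf : ContDiff 𝕜 2 f)
    (hV : Differentiable 𝕜 V) : Differentiable 𝕜 (derivAlong 𝕜 V f) :=
  ((hf.fderiv_right (m := 1) (by norm_num)).differentiable one_ne_zero).clm_apply hV

theorem derivAlong_comp {φ : E → F} {V : E → E} {W : F → F} {f : F → G} {c : 𝕜}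
    (hf : Differentiable 𝕜 f) (hφ : Differentiable 𝕜 φ)
    (hVW : ∀ p, fderiv 𝕜 φ p (V p) = c • W (φ p)) :
    derivAlong 𝕜 V (f ∘ φ) = c • (derivAlong 𝕜 W f ∘ φ) := by
  funext p
  rw [derivAlong, fderiv_comp p (hf _) (hφ _), ContinuousLinearMap.comp_apply, hVW, map_smul]
  rfl

theorem derivAlong_derivAlong_comp {φ : E → F} {V : E → E} {W : F → F} {f : F → G} {c : 𝕜}
    (hf : ContDiff 𝕜 2 f) (hW : Differentiable 𝕜 W) (hφ : Differentiable 𝕜 φ)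
    (hVW : ∀ p, fderiv 𝕜 φ p (V p) = c • W (φ p)) :
    derivAlong 𝕜 V (derivAlong 𝕜 V (f ∘ φ)) =
      (c * c) • (derivAlong 𝕜 W (derivAlong 𝕜 W f) ∘ φ) := by
  have hWf := hf.differentiable_derivAlong hW
  rw [derivAlong_comp (hf.differentiable two_ne_zero) hφ hVW, derivAlong_const_smul,
    derivAlong_comp hWf hφ hVW, smul_smul]

end DerivAlong

theorem Dtheta_eq_derivAlong : Dtheta = derivAlong ℝ (fun _ => (0, 0, 1)) := rfl

theorem Dhor_eq_derivAlong : Dhor = derivAlong ℝ (fun p => (1, p.2.2, 0)) := rfl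

def heisField₁ (u : ℝ × ℝ × ℝ) : ℝ × ℝ × ℝ := (0, 1, -(2 * u.1))

def heisField₂ (u : ℝ × ℝ × ℝ) : ℝ × ℝ × ℝ := (1, 0, 2 * u.2.1)

theorem differentiable_heisField₁ : Differentiable ℝ heisField₁ := by
  unfold heisField₁
  fun_prop

theorem differentiable_heisField₂ : Differentiable ℝ heisField₂ := by
  unfold heisField₂
  fun_prop

theorem X1_eq_derivAlong : X1 = derivAlong ℝ heisField₁ := by
  funext f u
  have hX : heisField₁ u = (0, 1, 0) - (2 * u.1) • (0, 0, 1) := by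
    simp [heisField₁]
  rw [X1, derivAlong, hX, map_sub, map_smul, smul_eq_mul]

theorem X2_eq_derivAlong : X2 = derivAlong ℝ heisField₂ := by
  funext f u
  have hX : heisField₂ u = (1, 0, 0) + (2 * u.2.1) • (0, 0, 1) := by
    simp [heisField₂]
  rw [X2, derivAlong, hX, map_add, map_smul, smul_eq_mul]

section CoordMap

variable {D11 D22 : ℝ}

theorem differentiable_coordMap : Differentiable ℝ (coordMap D11 D22) := by
  unfold coordMap
  fun_prop

theorem fderiv_coordMap_apply (p v : ℝ × ℝ × ℝ) :
    fderiv ℝ (coordMap D11 D22) p v =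
      (v.1 / √(2 * D22), v.2.2 / √(2 * D11),
        2 * (v.2.1 - (v.1 * p.2.2 + p.1 * v.2.2) / 2) / √(D11 * D22)) := by
  have hx : HasFDerivAt (fun q : ℝ × ℝ × ℝ => q.1) _ p := hasFDerivAt_fst (𝕜 := ℝ)
  have hy : HasFDerivAt (fun q : ℝ × ℝ × ℝ => q.2.1) _ p :=
    (hasFDerivAt_snd (𝕜 := ℝ) (p := p)).fst
  have hθ : HasFDerivAt (fun q : ℝ × ℝ × ℝ => q.2.2) _ p :=
    (hasFDerivAt_snd (𝕜 := ℝ) (p := p)).snd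
  have h : HasFDerivAt (coordMap D11 D22) _ p :=
    (hx.mul_const _).prodMk ((hθ.mul_const _).prodMk
      (((hy.sub ((hx.mul hθ).mul_const 2⁻¹)).const_mul 2).mul_const _))
  rw [h.fderiv]
  ext <;> simp only [ContinuousLinearMap.prod_apply, smul_apply, ContinuousLinearMap.coe_fst',
    ContinuousLinearMap.comp_apply, ContinuousLinearMap.coe_snd', sub_apply, add_apply,
    smul_eq_mul] <;> ring

theorem fderiv_coordMap_theta (h11 : 0 < D11) (p : ℝ × ℝ × ℝ) :
    fderiv ℝ (coordMap D11 D22) p (0, 0, 1) =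
      (√(2 * D11))⁻¹ • heisField₁ (coordMap D11 D22 p) := by
  rw [fderiv_coordMap_apply]
  simp only [coordMap, heisField₁, Real.sqrt_mul h11.le, Real.sqrt_mul zero_le_two, Prod.smul_mk,
    smul_eq_mul, Prod.mk.injEq, zero_div, one_div, mul_inv_rev, zero_mul, mul_one, mul_zero,
    zero_add, zero_sub, mul_neg, true_and]
  field_simp
  rw [Real.sq_sqrt zero_le_two]
  ring

theorem fderiv_coordMap_hor (h11 : 0 < D11) (p : ℝ × ℝ × ℝ) :
    fderiv ℝ (coordMap D11 D22) p (1, p.2.2, 0) =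
      (√(2 * D22))⁻¹ • heisField₂ (coordMap D11 D22 p) := by
  rw [fderiv_coordMap_apply]
  simp only [coordMap, heisField₂, Real.sqrt_mul h11.le, Real.sqrt_mul zero_le_two, Prod.smul_mk,
    smul_eq_mul, Prod.mk.injEq, zero_div, one_div, mul_inv_rev, one_mul, mul_one, mul_zero,
    add_zero, true_and]
  field_simp
  rw [Real.sq_sqrt zero_le_two]
  ring

end CoordMap

theorem stmt_10 (D11 D22 : ℝ) (h11 : 0 < D11) (h22 : 0 < D22)
    (Kt : ℝ × ℝ × ℝ → ℝ) (hKt : ContDiff ℝ 2 Kt) (p : ℝ × ℝ × ℝ) :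
    D11 * Dtheta (Dtheta (fun q => Kt (coordMap D11 D22 q))) p
      + D22 * Dhor (Dhor (fun q => Kt (coordMap D11 D22 q))) p
    = (1 / 2) * (X1 (X1 Kt) (coordMap D11 D22 p) + X2 (X2 Kt) (coordMap D11 D22 p)) := by
  have hθ := derivAlong_derivAlong_comp hKt differentiable_heisField₁ differentiable_coordMap
    (fderiv_coordMap_theta (D22 := D22) h11)
  have hhor := derivAlong_derivAlong_comp hKt differentiable_heisField₂ differentiable_coordMap
    (fderiv_coordMap_hor (D22 := D22) h11)
  rw [Dtheta_eq_derivAlong, Dhor_eq_derivAlong, X1_eq_derivAlong, X2_eq_derivAlong]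
  change D11 * derivAlong ℝ _ (derivAlong ℝ _ (Kt ∘ coordMap D11 D22)) p
    + D22 * derivAlong ℝ _ (derivAlong ℝ _ (Kt ∘ coordMap D11 D22)) p = _
  rw [hθ, hhor]
  simp only [Pi.smul_apply, Function.comp_apply, smul_eq_mul, ← mul_inv,
    Real.mul_self_sqrt (by positivity : (0 : ℝ) ≤ 2 * D11),
    Real.mul_self_sqrt (by positivity : (0 : ℝ) ≤ 2 * D22)]
  field_simp
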